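/- Let X be a convex polyomino such that V(X) ⊆ ℕ² is a sublattice of ℕ² with minimum (0,0) and maximum (m,n), and fix an injective order-preserving map ω from JI(X) to ℕ. If μ : μ_0 < ⋯ < μ_{m+n} is a maximal chain of V(X) and i ∈ Des(μ), then the direction of μ changes at μ_i (the vectors μ_i − μ_{i−1} and μ_{i+1} − μ_i are perpendicular), so μ_{i+1} = μ_{i−1} + (1,1), and the unit cell C(μ_{i+1}) with bottom-left corner μ_{i−1} and top-right corner μ_{i+1} is a cell of X. -/
import Mathlib


/-!  Cells in ℤ² are identified with their top-right corners: the cell `C v`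
is the unit square `[v.1 - 1, v.1] × [v.2 - 1, v.2] ⊆ ℝ²`. -/

/-- Two cells (identified by their top-right corners) are adjacent if they share an edge. -/
def Adj (c d : ℤ × ℤ) : Prop :=
  (c.1 = d.1 ∧ (c.2 = d.2 + 1 ∨ d.2 = c.2 + 1)) ∨
  (c.2 = d.2 ∧ (c.1 = d.1 + 1 ∨ d.1 = c.1 + 1))

/-- A polyomino: a nonempty finite set of cells, connected under adjacency. -/
def IsPolyomino (X : Finset (ℤ × ℤ)) : Prop :=
  X.Nonempty ∧ ∀ c ∈ X, ∀ d ∈ X,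
    Relation.ReflTransGen (fun a b => a ∈ X ∧ b ∈ X ∧ Adj a b) c d

/-- A polyomino is convex if it is both row-convex and column-convex. -/
def IsConvexPoly (X : Finset (ℤ × ℤ)) : Prop :=
  (∀ a b x y : ℤ, (a, y) ∈ X → (b, y) ∈ X → a ≤ x → x ≤ b → (x, y) ∈ X) ∧
  (∀ a b x y : ℤ, (y, a) ∈ X → (y, b) ∈ X → a ≤ x → x ≤ b → (y, x) ∈ X)

/-- `X` is thin if it contains no 2 × 2 block of four cells. -/
def IsThin (X : Finset (ℤ × ℤ)) : Prop :=
  ¬ ∃ w : ℤ × ℤ, w ∈ X ∧ w + ((1, 0) : ℤ × ℤ) ∈ X ∧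
    w + ((0, 1) : ℤ × ℤ) ∈ X ∧ w + ((1, 1) : ℤ × ℤ) ∈ X

/-- `X` is `L`-convex: convex, and any two cells are joined by a monotone path of cells
of `X` changing direction (horizontal to vertical or vice versa) at most once. -/
def IsLConvexPoly (X : Finset (ℤ × ℤ)) : Prop :=
  IsConvexPoly X ∧ ∀ c ∈ X, ∀ d ∈ X,
    ((∀ x : ℤ, min c.1 d.1 ≤ x → x ≤ max c.1 d.1 → ((x, c.2) : ℤ × ℤ) ∈ X) ∧
     (∀ y : ℤ, min c.2 d.2 ≤ y → y ≤ max c.2 d.2 → ((d.1, y) : ℤ × ℤ) ∈ X)) ∨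
    ((∀ y : ℤ, min c.2 d.2 ≤ y → y ≤ max c.2 d.2 → ((c.1, y) : ℤ × ℤ) ∈ X) ∧
     (∀ x : ℤ, min c.1 d.1 ≤ x → x ≤ max c.1 d.1 → ((x, d.2) : ℤ × ℤ) ∈ X))

/-- The vertex set `V(X)`: all corners of cells of `X`, partially ordered componentwise. -/
def Verts (X : Finset (ℤ × ℤ)) : Set (ℤ × ℤ) :=
  {v | ∃ c ∈ X, v = c ∨ v = c - ((1, 0) : ℤ × ℤ) ∨
    v = c - ((0, 1) : ℤ × ℤ) ∨ v = c - ((1, 1) : ℤ × ℤ)}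

/-- Setup: `V(X) ⊆ ℕ²` is a sublattice of `ℕ²` (closed under componentwise max and min)
with minimum `(0,0)` and maximum `(m,n)`. -/
def LatticeSetup (X : Finset (ℤ × ℤ)) (m n : ℕ) : Prop :=
  (∀ a ∈ Verts X, ∀ b ∈ Verts X, a ⊔ b ∈ Verts X ∧ a ⊓ b ∈ Verts X) ∧
  ((0, 0) : ℤ × ℤ) ∈ Verts X ∧ (((m : ℤ), (n : ℤ)) : ℤ × ℤ) ∈ Verts X ∧
  ∀ v ∈ Verts X, ((0, 0) : ℤ × ℤ) ≤ v ∧ v ≤ (((m : ℤ), (n : ℤ)) : ℤ × ℤ)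

/-- Join-irreducible elements of the lattice `V(X)`: nonminimal elements that are not
the join of two elements strictly below them. -/
def JoinIrr (X : Finset (ℤ × ℤ)) : Set (ℤ × ℤ) :=
  {p | p ∈ Verts X ∧ (∃ q ∈ Verts X, q < p) ∧
    ∀ a ∈ Verts X, ∀ b ∈ Verts X, a < p → b < p → a ⊔ b ≠ p}

/-- `ω` is an injective order-preserving map from `JI(X)` to `ℕ`. -/
def OmegaOK (X : Finset (ℤ × ℤ)) (ω : ℤ × ℤ → ℕ) : Prop :=
  Set.InjOn ω (JoinIrr X) ∧
  ∀ p ∈ JoinIrr X, ∀ q ∈ JoinIrr X, p ≤ q → ω p ≤ ω q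

/-- A maximal chain of `V(X)`, written as a monotone unit lattice path
`μ 0 = (0,0) < μ 1 < ⋯ < μ (m+n) = (m,n)` through vertices of `X`
(normalized by `μ i = (m,n)` for `i ≥ m+n`). -/
def IsMaxChainPath (X : Finset (ℤ × ℤ)) (m n : ℕ) (μ : ℕ → ℤ × ℤ) : Prop :=
  μ 0 = (0, 0) ∧
  (∀ i, i < m + n → μ (i + 1) - μ i = ((1, 0) : ℤ × ℤ) ∨
    μ (i + 1) - μ i = ((0, 1) : ℤ × ℤ)) ∧
  (∀ i, m + n ≤ i → μ i = (((m : ℤ), (n : ℤ)) : ℤ × ℤ)) ∧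
  (∀ i, i ≤ m + n → μ i ∈ Verts X)

/-- `i` is a descent of the maximal chain `μ`:  `ω p_i > ω p_{i+1}`, where `p_j` is the
unique join-irreducible `p` with `p ≤ μ j` and `p ≰ μ (j-1)`. -/
def DescentAt (X : Finset (ℤ × ℤ)) (ω : ℤ × ℤ → ℕ) (μ : ℕ → ℤ × ℤ) (i : ℕ) : Prop :=
  ∃ p ∈ JoinIrr X, ∃ q ∈ JoinIrr X,
    p ≤ μ i ∧ ¬ p ≤ μ (i - 1) ∧ q ≤ μ (i + 1) ∧ ¬ q ≤ μ i ∧ ω q < ω p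

/-- The descent set of a maximal chain: descents `i` with `1 ≤ i ≤ m+n-1`. -/
def Des (X : Finset (ℤ × ℤ)) (m n : ℕ) (ω : ℤ × ℤ → ℕ) (μ : ℕ → ℤ × ℤ) : Set ℕ :=
  {i | 1 ≤ i ∧ i < m + n ∧ DescentAt X ω μ i}

/-- `|M_k(X)|`: the number of maximal chains of `V(X)` with exactly `k` descents. -/
noncomputable def numChains (X : Finset (ℤ × ℤ)) (m n : ℕ) (ω : ℤ × ℤ → ℕ) (k : ℕ) : ℕ :=
  Set.ncard {μ : ℕ → ℤ × ℤ | IsMaxChainPath X m n μ ∧ (Des X m n ω μ).ncard = k}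

/-- A `k`-rook configuration in `X`: `k` cells of `X`, no two in the same row or column. -/
def IsRookConfig (X : Finset (ℤ × ℤ)) (k : ℕ) (S : Finset (ℤ × ℤ)) : Prop :=
  ↑S ⊆ (↑X : Set (ℤ × ℤ)) ∧ S.card = k ∧
  ∀ c ∈ S, ∀ d ∈ S, c ≠ d → c.1 ≠ d.1 ∧ c.2 ≠ d.2

/-- `r_k`: the number of `k`-rook configurations in `X`. -/
noncomputable def rook (X : Finset (ℤ × ℤ)) (k : ℕ) : ℕ :=
  Set.ncard {S : Finset (ℤ × ℤ) | IsRookConfig X k S}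

/-- The map `ψ`: sends a maximal chain `μ` to the set of cells `C (μ (i+1))` for `i ∈ Des μ`. -/
def psi (X : Finset (ℤ × ℤ)) (m n : ℕ) (ω : ℤ × ℤ → ℕ) (μ : ℕ → ℤ × ℤ) :
    Set (ℤ × ℤ) :=
  (fun i => μ (i + 1)) '' Des X m n ω μ

/-- The ideal `I_X` of the polyomino ring: generated by the inner 2-minors
`x_a x_b - x_c x_d` for intervals `[a,b]` of `V(X)`. -/
noncomputable def polyominoIdeal (kk : Type*) [Field kk] (X : Finset (ℤ × ℤ)) :
    Ideal (MvPolynomial (Verts X) kk) :=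
  Ideal.span {f | ∃ a b c d : Verts X,
    (a : ℤ × ℤ) < (b : ℤ × ℤ) ∧
    (c : ℤ × ℤ) = (((a : ℤ × ℤ).1, (b : ℤ × ℤ).2) : ℤ × ℤ) ∧
    (d : ℤ × ℤ) = (((b : ℤ × ℤ).1, (a : ℤ × ℤ).2) : ℤ × ℤ) ∧
    f = MvPolynomial.X a * MvPolynomial.X b - MvPolynomial.X c * MvPolynomial.X d}

/-- `dim_k (k[X])_i`: the dimension of the degree-`i` graded component of `k[X] = R/I_X`,
realized as the image of the homogeneous degree-`i` part of `R` in the quotient. -/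
noncomputable def hilbCoeff (kk : Type*) [Field kk] (X : Finset (ℤ × ℤ)) (i : ℕ) : ℕ :=
  Module.finrank kk (Submodule.map
    (Ideal.Quotient.mkₐ kk (polyominoIdeal kk X)).toLinearMap
    (MvPolynomial.homogeneousSubmodule (Verts X) kk i))

/-- The Hilbert series `HS(t) = Σ_{i ≥ 0} dim_k (k[X])_i t^i ∈ ℤ[[t]]`. -/
noncomputable def hilbSeries (kk : Type*) [Field kk] (X : Finset (ℤ × ℤ)) :
    PowerSeries ℤ :=
  PowerSeries.mk fun i => (hilbCoeff kk X i : ℤ)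

/-- The region `⋃ X ⊆ ℝ²` covered by the cells of `X`. -/
def Region (X : Finset (ℤ × ℤ)) : Set (ℝ × ℝ) :=
  ⋃ c ∈ X, Set.Icc (((c.1 : ℝ) - 1, (c.2 : ℝ) - 1) : ℝ × ℝ) (((c.1 : ℝ), (c.2 : ℝ)) : ℝ × ℝ)

/-- Left-boundary vertices: top-left corners of cells of `X` lying on the topological
boundary of the region `⋃ X ⊆ ℝ²`. -/
def LeftBdry (X : Finset (ℤ × ℤ)) : Set (ℤ × ℤ) :=
  {v | (∃ c ∈ X, v = c - ((1, 0) : ℤ × ℤ)) ∧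
    (((v.1 : ℝ), (v.2 : ℝ)) : ℝ × ℝ) ∈ frontier (Region X)}

/-- Bottom-boundary vertices: bottom-right corners of cells of `X` lying on the topological
boundary of the region `⋃ X ⊆ ℝ²`. -/
def BottomBdry (X : Finset (ℤ × ℤ)) : Set (ℤ × ℤ) :=
  {v | (∃ c ∈ X, v = c - ((0, 1) : ℤ × ℤ)) ∧
    (((v.1 : ℝ), (v.2 : ℝ)) : ℝ × ℝ) ∈ frontier (Region X)}


/-- Normalized characterization of `Verts`. -/
lemma mem_verts_iff (X : Finset (ℤ × ℤ)) (v : ℤ × ℤ) :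
    v ∈ Verts X ↔ ∃ c ∈ X, c = v ∨ c = v + (1, 0) ∨ c = v + (0, 1) ∨ c = v + (1, 1) := by
  constructor
  · rintro ⟨c, hc, h⟩
    refine ⟨c, hc, ?_⟩
    obtain ⟨c1, c2⟩ := c; obtain ⟨v1, v2⟩ := v
    simp only [Prod.mk_sub_mk, Prod.mk_add_mk, Prod.mk.injEq] at h ⊢
    omega
  · rintro ⟨c, hc, h⟩
    refine ⟨c, hc, ?_⟩
    obtain ⟨c1, c2⟩ := c; obtain ⟨v1, v2⟩ := v
    simp only [Prod.mk_sub_mk, Prod.mk_add_mk, Prod.mk.injEq] at h ⊢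
    omega

/-- A path of cells crossing the vertical line `x = k + 1` from left to right must
contain two horizontally adjacent cells straddling the line. -/
lemma entry_lemma (X : Finset (ℤ × ℤ)) (hpoly : IsPolyomino X) {c d : ℤ × ℤ}
    (hc : c ∈ X) (hd : d ∈ X) (k : ℤ) (h1 : c.1 ≤ k) (h2 : k + 1 ≤ d.1) :
    ∃ y, ((k, y) : ℤ × ℤ) ∈ X ∧ ((k + 1, y) : ℤ × ℤ) ∈ X := by
  have key : ∀ e : ℤ × ℤ, Relation.ReflTransGen (fun a b => a ∈ X ∧ b ∈ X ∧ Adj a b) c e →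
      k + 1 ≤ e.1 → ∃ y, ((k, y) : ℤ × ℤ) ∈ X ∧ ((k + 1, y) : ℤ × ℤ) ∈ X := by
    intro e hpath
    induction hpath with
    | refl => intro h; omega
    | @tail b e hp hstep ih =>
      intro he
      by_cases hb : b.1 ≤ k
      · obtain ⟨hbX, heX, hadj⟩ := hstep
        simp only [Adj] at hadj
        obtain ⟨b1, b2⟩ := b; obtain ⟨e1, e2⟩ := e
        simp only at hadj hb he
        have h3 : b1 = k ∧ e1 = k + 1 ∧ b2 = e2 := by omega
        obtain ⟨rfl, rfl, rfl⟩ := h3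
        exact ⟨b2, hbX, heX⟩
      · exact ih (by omega)
  exact key d (hpoly.2 c hc d hd) h2

set_option maxHeartbeats 1000000 in
/-- If all four corners of a cell are vertices of a convex polyomino, the cell
belongs to the polyomino. -/
lemma cell_of_corners (X : Finset (ℤ × ℤ)) (hpoly : IsPolyomino X)
    (hconv : IsConvexPoly X) (a b : ℤ)
    (h00 : ((a, b) : ℤ × ℤ) ∈ Verts X) (h10 : ((a + 1, b) : ℤ × ℤ) ∈ Verts X)
    (h01 : ((a, b + 1) : ℤ × ℤ) ∈ Verts X) (h11 : ((a + 1, b + 1) : ℤ × ℤ) ∈ Verts X) :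
    ((a + 1, b + 1) : ℤ × ℤ) ∈ X := by
  by_contra hg
  obtain ⟨hrow, hcol⟩ := hconv
  -- extract witness cells for the four corners
  have hd0 : ((a, b) : ℤ × ℤ) ∈ X ∨ ((a + 1, b) : ℤ × ℤ) ∈ X ∨ ((a, b + 1) : ℤ × ℤ) ∈ X := by
    rw [mem_verts_iff] at h00
    obtain ⟨⟨c1, c2⟩, hc, hopt⟩ := h00
    simp only [Prod.mk_add_mk, Prod.mk.injEq, add_zero, zero_add] at hopt
    rcases hopt with ⟨rfl, rfl⟩ | ⟨rfl, rfl⟩ | ⟨rfl, rfl⟩ | ⟨rfl, rfl⟩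
    exacts [Or.inl hc, Or.inr (Or.inl hc), Or.inr (Or.inr hc), absurd hc hg]
  have hd1 : ((a + 1, b) : ℤ × ℤ) ∈ X ∨ ((a + 1 + 1, b) : ℤ × ℤ) ∈ X ∨
      ((a + 1 + 1, b + 1) : ℤ × ℤ) ∈ X := by
    rw [mem_verts_iff] at h10
    obtain ⟨⟨c1, c2⟩, hc, hopt⟩ := h10
    simp only [Prod.mk_add_mk, Prod.mk.injEq, add_zero, zero_add] at hopt
    rcases hopt with ⟨rfl, rfl⟩ | ⟨rfl, rfl⟩ | ⟨rfl, rfl⟩ | ⟨rfl, rfl⟩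
    exacts [Or.inl hc, Or.inr (Or.inl hc), absurd hc hg, Or.inr (Or.inr hc)]
  have hd2 : ((a, b + 1) : ℤ × ℤ) ∈ X ∨ ((a, b + 1 + 1) : ℤ × ℤ) ∈ X ∨
      ((a + 1, b + 1 + 1) : ℤ × ℤ) ∈ X := by
    rw [mem_verts_iff] at h01
    obtain ⟨⟨c1, c2⟩, hc, hopt⟩ := h01
    simp only [Prod.mk_add_mk, Prod.mk.injEq, add_zero, zero_add] at hopt
    rcases hopt with ⟨rfl, rfl⟩ | ⟨rfl, rfl⟩ | ⟨rfl, rfl⟩ | ⟨rfl, rfl⟩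
    exacts [Or.inl hc, absurd hc hg, Or.inr (Or.inl hc), Or.inr (Or.inr hc)]
  have hd3 : ((a + 1 + 1, b + 1) : ℤ × ℤ) ∈ X ∨ ((a + 1, b + 1 + 1) : ℤ × ℤ) ∈ X ∨
      ((a + 1 + 1, b + 1 + 1) : ℤ × ℤ) ∈ X := by
    rw [mem_verts_iff] at h11
    obtain ⟨⟨c1, c2⟩, hc, hopt⟩ := h11
    simp only [Prod.mk_add_mk, Prod.mk.injEq, add_zero, zero_add] at hopt
    rcases hopt with ⟨rfl, rfl⟩ | ⟨rfl, rfl⟩ | ⟨rfl, rfl⟩ | ⟨rfl, rfl⟩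
    exacts [absurd hc hg, Or.inl hc, Or.inr (Or.inl hc), Or.inr (Or.inr hc)]
  -- convexity facts
  have notPG : ¬ (((a + 1, b) : ℤ × ℤ) ∈ X ∧ ((a + 1, b + 1 + 1) : ℤ × ℤ) ∈ X) := by
    rintro ⟨hP, hG⟩
    exact hg (hcol b (b + 1 + 1) (b + 1) (a + 1) hP hG (by omega) (by omega))
  have notRE : ¬ (((a, b + 1) : ℤ × ℤ) ∈ X ∧ ((a + 1 + 1, b + 1) : ℤ × ℤ) ∈ X) := by
    rintro ⟨hR, hE⟩
    exact hg (hrow a (a + 1 + 1) (a + 1) (b + 1) hR hE (by omega) (by omega))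
  have hAD : ((a, b) : ℤ × ℤ) ∈ X → ((a + 1 + 1, b) : ℤ × ℤ) ∈ X →
      ((a + 1, b) : ℤ × ℤ) ∈ X := fun h h' => hrow a (a + 1 + 1) (a + 1) b h h' (by omega) (by omega)
  have hAF : ((a, b) : ℤ × ℤ) ∈ X → ((a, b + 1 + 1) : ℤ × ℤ) ∈ X →
      ((a, b + 1) : ℤ × ℤ) ∈ X := fun h h' => hcol b (b + 1 + 1) (b + 1) a h h' (by omega) (by omega)
  have hDH : ((a + 1 + 1, b) : ℤ × ℤ) ∈ X → ((a + 1 + 1, b + 1 + 1) : ℤ × ℤ) ∈ X →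
      ((a + 1 + 1, b + 1) : ℤ × ℤ) ∈ X :=
    fun h h' => hcol b (b + 1 + 1) (b + 1) (a + 1 + 1) h h' (by omega) (by omega)
  have hFH : ((a, b + 1 + 1) : ℤ × ℤ) ∈ X → ((a + 1 + 1, b + 1 + 1) : ℤ × ℤ) ∈ X →
      ((a + 1, b + 1 + 1) : ℤ × ℤ) ∈ X :=
    fun h h' => hrow a (a + 1 + 1) (a + 1) (b + 1 + 1) h h' (by omega) (by omega)
  -- connectivity facts
  have hi1 : ((a + 1, b) : ℤ × ℤ) ∈ X → ((a, b + 1) : ℤ × ℤ) ∈ X →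
      ((a + 1 + 1, b + 1 + 1) : ℤ × ℤ) ∈ X → False := by
    intro hP hR hH
    obtain ⟨y, hy1, hy2⟩ := entry_lemma X hpoly hP hH (a + 1) (le_refl _) (le_refl _)
    have hyb : y ≤ b := by
      by_contra h
      exact hg (hcol b y (b + 1) (a + 1) hP hy1 (by omega) (by omega))
    have hE : ((a + 1 + 1, b + 1) : ℤ × ℤ) ∈ X :=
      hcol y (b + 1 + 1) (b + 1) (a + 1 + 1) hy2 hH (by omega) (by omega)
    exact hg (hrow a (a + 1 + 1) (a + 1) (b + 1) hR hE (by omega) (by omega))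
  have hi2 : ((a + 1, b) : ℤ × ℤ) ∈ X → ((a + 1 + 1, b + 1) : ℤ × ℤ) ∈ X →
      ((a, b + 1 + 1) : ℤ × ℤ) ∈ X → False := by
    intro hP hE hF
    obtain ⟨y, hy1, hy2⟩ := entry_lemma X hpoly hF hE a (le_refl _) (Int.le_add_one (le_refl _))
    have hyb : y ≤ b := by
      by_contra h
      exact hg (hcol b y (b + 1) (a + 1) hP hy2 (by omega) (by omega))
    have hR : ((a, b + 1) : ℤ × ℤ) ∈ X :=
      hcol y (b + 1 + 1) (b + 1) a hy1 hF (by omega) (by omega)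
    exact hg (hrow a (a + 1 + 1) (a + 1) (b + 1) hR hE (by omega) (by omega))
  have hi2' : ((a + 1, b + 1 + 1) : ℤ × ℤ) ∈ X → ((a, b + 1) : ℤ × ℤ) ∈ X →
      ((a + 1 + 1, b) : ℤ × ℤ) ∈ X → False := by
    intro hG hR hD
    obtain ⟨y, hy1, hy2⟩ := entry_lemma X hpoly hR hD (a + 1) (Int.le_add_one (le_refl _)) (le_refl _)
    have hyb : b + 1 + 1 ≤ y := by
      by_contra h
      exact hg (hcol y (b + 1 + 1) (b + 1) (a + 1) hy1 hG (by omega) (by omega))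
    have hE : ((a + 1 + 1, b + 1) : ℤ × ℤ) ∈ X :=
      hcol b y (b + 1) (a + 1 + 1) hD hy2 (by omega) (by omega)
    exact hg (hrow a (a + 1 + 1) (a + 1) (b + 1) hR hE (by omega) (by omega))
  have hi3 : ((a, b) : ℤ × ℤ) ∈ X → ((a + 1 + 1, b + 1) : ℤ × ℤ) ∈ X →
      ((a + 1, b + 1 + 1) : ℤ × ℤ) ∈ X → False := by
    intro hA hE hG
    obtain ⟨y, hy1, hy2⟩ := entry_lemma X hpoly hA hE a (le_refl _) (Int.le_add_one (le_refl _))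
    have hyb : b + 1 + 1 ≤ y := by
      by_contra h
      exact hg (hcol y (b + 1 + 1) (b + 1) (a + 1) hy2 hG (by omega) (by omega))
    have hR : ((a, b + 1) : ℤ × ℤ) ∈ X :=
      hcol b y (b + 1) a hA hy1 (by omega) (by omega)
    exact hg (hrow a (a + 1 + 1) (a + 1) (b + 1) hR hE (by omega) (by omega))
  rcases hd1 with hP | hD | hE
  · rcases hd2 with hR | hF | hG
    · rcases hd3 with hE | hG | hH
      · exact notRE ⟨hR, hE⟩
      · exact notPG ⟨hP, hG⟩
      · exact hi1 hP hR hH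
    · rcases hd3 with hE | hG | hH
      · exact hi2 hP hE hF
      · exact notPG ⟨hP, hG⟩
      · exact notPG ⟨hP, hFH hF hH⟩
    · exact notPG ⟨hP, hG⟩
  · rcases hd2 with hR | hF | hG
    · rcases hd3 with hE | hG | hH
      · exact notRE ⟨hR, hE⟩
      · exact hi2' hG hR hD
      · exact notRE ⟨hR, hDH hD hH⟩
    · rcases hd3 with hE | hG | hH
      · rcases hd0 with hA | hP | hR
        · exact notRE ⟨hAF hA hF, hE⟩
        · exact hi2 hP hE hF
        · exact notRE ⟨hR, hE⟩
      · rcases hd0 with hA | hP | hR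
        · exact notPG ⟨hAD hA hD, hG⟩
        · exact notPG ⟨hP, hG⟩
        · exact hi2' hG hR hD
      · have hG := hFH hF hH
        rcases hd0 with hA | hP | hR
        · exact notPG ⟨hAD hA hD, hG⟩
        · exact notPG ⟨hP, hG⟩
        · exact hi2' hG hR hD
    · rcases hd0 with hA | hP | hR
      · exact notPG ⟨hAD hA hD, hG⟩
      · exact notPG ⟨hP, hG⟩
      · exact hi2' hG hR hD
  · rcases hd2 with hR | hF | hG
    · exact notRE ⟨hR, hE⟩
    · rcases hd0 with hA | hP | hR
      · exact notRE ⟨hAF hA hF, hE⟩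
      · exact hi2 hP hE hF
      · exact notRE ⟨hR, hE⟩
    · rcases hd0 with hA | hP | hR
      · exact hi3 hA hE hG
      · exact notPG ⟨hP, hG⟩
      · exact notRE ⟨hR, hE⟩

theorem descent_gives_cell (X : Finset (ℤ × ℤ)) (m n : ℕ)
    (hpoly : IsPolyomino X) (hconv : IsConvexPoly X)
    (hlat : LatticeSetup X m n)
    (ω : ℤ × ℤ → ℕ) (hω : OmegaOK X ω)
    (μ : ℕ → ℤ × ℤ) (hμ : IsMaxChainPath X m n μ)
    (i : ℕ) (hi : i ∈ Des X m n ω μ) :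
    (μ i - μ (i - 1)).1 * (μ (i + 1) - μ i).1 +
        (μ i - μ (i - 1)).2 * (μ (i + 1) - μ i).2 = 0 ∧
      μ (i + 1) = μ (i - 1) + ((1, 1) : ℤ × ℤ) ∧ μ (i + 1) ∈ X := by
  obtain ⟨hi1, hi2, p, hp, q, hq, hpLe, hpNot, hqLe, hqNot, hlt⟩ := hi
  have him : i - 1 + 1 = i := by omega
  have hs1 := hμ.2.1 (i - 1) (by omega)
  rw [him] at hs1
  have hs2 := hμ.2.1 i (by omega)
  have huV : μ (i - 1) ∈ Verts X := hμ.2.2.2 (i - 1) (by omega)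
  have hvV : μ i ∈ Verts X := hμ.2.2.2 i (by omega)
  have hwV : μ (i + 1) ∈ Verts X := hμ.2.2.2 (i + 1) (by omega)
  have hnotpq : ¬ p ≤ q := fun h => by have := hω.2 p hp q hq h; omega
  obtain ⟨hpV, hpLow, hpJoin⟩ := hp
  obtain ⟨hqV, -, -⟩ := hq
  obtain ⟨u1, u2, hU⟩ : ∃ a b, μ (i - 1) = (a, b) := ⟨(μ (i - 1)).1, (μ (i - 1)).2, rfl⟩
  obtain ⟨v1, v2, hV⟩ : ∃ a b, μ i = (a, b) := ⟨(μ i).1, (μ i).2, rfl⟩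
  obtain ⟨w1, w2, hW⟩ : ∃ a b, μ (i + 1) = (a, b) := ⟨(μ (i + 1)).1, (μ (i + 1)).2, rfl⟩
  rw [hU] at huV
  rw [hV] at hvV
  rw [hW] at hwV
  rw [hU, hV] at hs1
  rw [hV, hW] at hs2
  rw [hV] at hpLe hqNot
  rw [hU] at hpNot
  rw [hW] at hqLe
  rw [hU, hV, hW]
  obtain ⟨p1, p2⟩ := p
  obtain ⟨q1, q2⟩ := q
  simp only [Prod.mk_sub_mk, Prod.mk.injEq] at hs1 hs2
  rw [Prod.mk_le_mk] at hpLe hqLe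
  rw [Prod.mk_le_mk] at hpNot hqNot
  rw [Prod.mk_le_mk] at hnotpq
  rcases hs1 with ⟨ha1, ha2⟩ | ⟨ha1, ha2⟩ <;> rcases hs2 with ⟨hb1, hb2⟩ | ⟨hb1, hb2⟩
  · -- both horizontal : contradiction via join-irreducibility of p
    exfalso
    have hp1 : p1 = u1 + 1 := by omega
    have hq1 : q1 = u1 + 1 + 1 := by omega
    have hq2 : q2 < p2 := by omega
    have hm1 : ((u1, p2) : ℤ × ℤ) ∈ Verts X := by
      have h := (hlat.1 _ hpV _ huV).2
      rwa [Prod.mk_inf_mk, inf_eq_right.mpr (by omega : (u1 : ℤ) ≤ p1),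
        inf_eq_left.mpr (by omega : (p2 : ℤ) ≤ u2)] at h
    have hm2 : ((p1, q2) : ℤ × ℤ) ∈ Verts X := by
      have h := (hlat.1 _ hpV _ hqV).2
      rwa [Prod.mk_inf_mk, inf_eq_left.mpr (by omega : (p1 : ℤ) ≤ q1),
        inf_eq_right.mpr (by omega : (q2 : ℤ) ≤ p2)] at h
    refine hpJoin _ hm1 _ hm2 (by rw [Prod.mk_lt_mk]; omega) (by rw [Prod.mk_lt_mk]; omega) ?_
    rw [Prod.mk_sup_mk, sup_eq_right.mpr (by omega : (u1 : ℤ) ≤ p1),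
      sup_eq_left.mpr (by omega : (q2 : ℤ) ≤ p2)]
  · -- horizontal then vertical
    have hp1 : p1 = u1 + 1 := by omega
    have hq2 : q2 = u2 + 1 := by omega
    have hq1 : q1 ≤ u1 := by omega
    have hcor : ((u1, u2 + 1) : ℤ × ℤ) ∈ Verts X := by
      have h := (hlat.1 _ huV _ hqV).1
      rwa [Prod.mk_sup_mk, sup_eq_left.mpr (by omega : (q1 : ℤ) ≤ u1),
        sup_eq_right.mpr (by omega : (u2 : ℤ) ≤ q2), hq2] at h
    have hv1 : v1 = u1 + 1 := by omega
    have hv2 : v2 = u2 := by omega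
    have hw1 : w1 = u1 + 1 := by omega
    have hw2 : w2 = u2 + 1 := by omega
    rw [hv1, hv2] at hvV
    rw [hw1, hw2] at hwV
    refine ⟨by simp [Prod.mk_sub_mk, hv1, hv2, hw1, hw2], ?_, ?_⟩
    · rw [hw1, hw2]
      simp [Prod.ext_iff, Prod.fst_add, Prod.snd_add, Prod.fst_one, Prod.snd_one]
    · rw [hw1, hw2]
      exact cell_of_corners X hpoly hconv u1 u2 huV hvV hcor hwV
  · -- vertical then horizontal
    have hp2 : p2 = u2 + 1 := by omega
    have hq1 : q1 = u1 + 1 := by omega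
    have hq2 : q2 ≤ u2 := by omega
    have hcor : ((u1 + 1, u2) : ℤ × ℤ) ∈ Verts X := by
      have h := (hlat.1 _ huV _ hqV).1
      rwa [Prod.mk_sup_mk, sup_eq_right.mpr (by omega : (u1 : ℤ) ≤ q1),
        sup_eq_left.mpr (by omega : (q2 : ℤ) ≤ u2), hq1] at h
    have hv1 : v1 = u1 := by omega
    have hv2 : v2 = u2 + 1 := by omega
    have hw1 : w1 = u1 + 1 := by omega
    have hw2 : w2 = u2 + 1 := by omega
    rw [hv1, hv2] at hvV
    rw [hw1, hw2] at hwV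
    refine ⟨by simp [Prod.mk_sub_mk, hv1, hv2, hw1, hw2], ?_, ?_⟩
    · rw [hw1, hw2]
      simp [Prod.ext_iff, Prod.fst_add, Prod.snd_add, Prod.fst_one, Prod.snd_one]
    · rw [hw1, hw2]
      exact cell_of_corners X hpoly hconv u1 u2 huV hcor hvV hwV
  · -- both vertical : contradiction via join-irreducibility of p
    exfalso
    have hp2 : p2 = u2 + 1 := by omega
    have hq2 : q2 = u2 + 1 + 1 := by omega
    have hq1 : q1 < p1 := by omega
    have hm1 : ((p1, u2) : ℤ × ℤ) ∈ Verts X := by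
      have h := (hlat.1 _ hpV _ huV).2
      rwa [Prod.mk_inf_mk, inf_eq_left.mpr (by omega : (p1 : ℤ) ≤ u1),
        inf_eq_right.mpr (by omega : (u2 : ℤ) ≤ p2)] at h
    have hm2 : ((q1, p2) : ℤ × ℤ) ∈ Verts X := by
      have h := (hlat.1 _ hpV _ hqV).2
      rwa [Prod.mk_inf_mk, inf_eq_right.mpr (by omega : (q1 : ℤ) ≤ p1),
        inf_eq_left.mpr (by omega : (p2 : ℤ) ≤ q2)] at h
    refine hpJoin _ hm1 _ hm2 (by rw [Prod.mk_lt_mk]; omega) (by rw [Prod.mk_lt_mk]; omega) ?_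
    rw [Prod.mk_sup_mk, sup_eq_left.mpr (by omega : (q1 : ℤ) ≤ p1),
      sup_eq_right.mpr (by omega : (u2 : ℤ) ≤ p2)]
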